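/- For any symmetric weight function w on pairs from {0,...,n-1} and any fixed linear order of the vertices, the minimum over all partitions into consecutive intervals of the weighted editing cost is attained, and opt(n-1) as computed by the recurrence equals this minimum. -/

import Mathlib

/-!
In a consecutive partition of `{0, …, n}` the last part is an interval `[m, n]`; deleting it
leaves a consecutive partition of `{0, …, m - 1}`, and the cost splits into the cost of that
partition plus the pairs whose larger vertex lies in `[m, n]`, which are cut exactly when the
smaller vertex is below `m`. So the optimum satisfies the Bellman equation
`opt(n) = min_m (opt(m - 1) + cost of the last block [m, n])`, and unrolling the recurrence for
`opt'` shows that `opt'(n, n - m)` is the `m`-th term of that minimum (symmetry of `w` reconciles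
the recurrence's `w(j, k)`, `k < j`, with the cost's `w(a, b)`, `a < b`).
-/

open Finset

def samePartN {s : Finset ℕ} (P : Finpartition s) (a b : ℕ) : Prop :=
  ∃ t ∈ P.parts, a ∈ t ∧ b ∈ t

instance {s : Finset ℕ} (P : Finpartition s) (a b : ℕ) : Decidable (samePartN P a b) := by
  unfold samePartN; infer_instance

/-- A partition into sets of consecutive integers. -/
def IsConsecPartition {s : Finset ℕ} (P : Finpartition s) : Prop :=
  ∀ t ∈ P.parts, ∀ a ∈ t, ∀ b ∈ t, ∀ c, a ≤ c → c ≤ b → c ∈ t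

/-- Weighted editing cost of a partition: `w⁻` for same-part pairs, `w⁺` for
cross-part pairs. -/
noncomputable def pcost (w : ℕ → ℕ → ℝ) (s : Finset ℕ) (P : Finpartition s) : ℝ :=
  ∑ b ∈ s, ∑ a ∈ s.filter (· < b),
    if samePartN P a b then max (-w a b) 0 else max (w a b) 0

/-- The dynamic programming table: `optRow w j i` is `opt'(j,i)` computed by the
recurrences `opt'(j,0) = opt(j-1) + Σ_{k<j} w⁺(j,k)`,
`opt'(j,i) = opt'(j-1,i-1) + Σ_{k<j-i} w⁺(j,k) + Σ_{k=j-i}^{j-1} w⁻(j,k)`,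
where `opt(j) = min_{0 ≤ i ≤ j} opt'(j,i)`. -/
noncomputable def optRow (w : ℕ → ℕ → ℝ) : ℕ → ℕ → ℝ
  | 0, _ => 0
  | j + 1, 0 =>
      (Finset.range (j + 1)).inf' (Finset.nonempty_range_iff.mpr (Nat.succ_ne_zero j)) (fun i => optRow w j i) +
        ∑ k ∈ Finset.range (j + 1), max (w (j + 1) k) 0
  | j + 1, i + 1 =>
      optRow w j i + ∑ k ∈ Finset.range (j + 1 - (i + 1)), max (w (j + 1) k) 0 +
        ∑ k ∈ Finset.Ico (j + 1 - (i + 1)) (j + 1), max (-w (j + 1) k) 0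


lemma Finpartition.sup_erase_parts {α : Type*} [GeneralizedBooleanAlgebra α] [DecidableEq α]
    {a t : α} (P : Finpartition a) (ht : t ∈ P.parts) : (P.parts.erase t).sup id = a \ t := by
  have hdisj : Disjoint t ((P.parts.erase t).sup id) :=
    P.supIndep (erase_subset _ _) ht (notMem_erase _ _)
  calc (P.parts.erase t).sup id = (t ⊔ (P.parts.erase t).sup id) \ t :=
        hdisj.sup_sdiff_cancel_left.symm
    _ = a \ t := by
      congr 1
      exact (sup_insert (f := id)).symm.trans (by rw [insert_erase ht, P.sup_parts])

section SamePart

variable {s s' : Finset ℕ} {P : Finpartition s} {a b : ℕ}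

lemma samePartN_iff_mem_of_mem_parts {t : Finset ℕ} (ht : t ∈ P.parts) (hb : b ∈ t) :
    samePartN P a b ↔ a ∈ t :=
  ⟨fun ⟨_, hu, hau, hbu⟩ => P.eq_of_mem_parts hu ht hbu hb ▸ hau, fun ha => ⟨t, ht, ha, hb⟩⟩

lemma samePartN_iff_of_parts_subset {Q : Finpartition s'} (hQP : Q.parts ⊆ P.parts)
    (hb : b ∈ s') : samePartN Q a b ↔ samePartN P a b := by
  obtain ⟨t, ht, hbt⟩ := Q.exists_mem hb
  rw [samePartN_iff_mem_of_mem_parts ht hbt, samePartN_iff_mem_of_mem_parts (hQP ht) hbt]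

end SamePart

section Consecutive

variable {m n : ℕ}

lemma IsConsecPartition.exists_Ico_mem_parts {P : Finpartition (range (n + 1))}
    (hP : IsConsecPartition P) : ∃ m ≤ n, Ico m (n + 1) ∈ P.parts := by
  obtain ⟨t, ht, hnt⟩ := P.exists_mem (self_mem_range_succ n)
  have htn : ∀ x ∈ t, x ≤ n := fun x hx => Nat.lt_succ_iff.mp (mem_range.mp (P.le ht hx))
  have hne : t.Nonempty := ⟨n, hnt⟩
  refine ⟨t.min' hne, htn _ (t.min'_mem hne), ?_⟩
  convert ht using 1
  ext x
  rw [mem_Ico, Nat.lt_succ_iff]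
  exact ⟨fun hx => hP t ht _ (t.min'_mem hne) n hnt x hx.1 hx.2,
    fun hx => ⟨t.min'_le x hx, htn x hx⟩⟩

lemma IsConsecPartition.exists_restrict {P : Finpartition (range n)} (hP : IsConsecPartition P)
    (hmn : Ico m n ∈ P.parts) :
    ∃ Q : Finpartition (range m), IsConsecPartition Q ∧ Q.parts ⊆ P.parts := by
  have hlt : m < n := nonempty_Ico.mp (P.nonempty_of_mem_parts hmn)
  have hsup : (P.parts.erase (Ico m n)).sup id = range m := by
    rw [P.sup_erase_parts hmn]
    ext x
    simp only [mem_sdiff, mem_range, mem_Ico]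
    omega
  exact ⟨P.ofSubset (erase_subset _ _) hsup, fun t ht => hP t (mem_of_mem_erase ht),
    erase_subset _ _⟩

lemma IsConsecPartition.exists_extend {P : Finpartition (range m)} (hP : IsConsecPartition P)
    (hmn : m < n) :
    ∃ Q : Finpartition (range n), IsConsecPartition Q ∧ Ico m n ∈ Q.parts ∧ P.parts ⊆ Q.parts := by
  have hne : (Ico m n : Finset ℕ) ≠ ⊥ := (nonempty_Ico.mpr hmn).ne_empty
  have hdisj : Disjoint (range m) (Ico m n) := by
    rw [range_eq_Ico]
    exact Ico_disjoint_Ico_consecutive 0 m n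
  have hsup : range m ⊔ Ico m n = range n := by
    rw [range_eq_Ico, range_eq_Ico]
    exact Ico_union_Ico_eq_Ico m.zero_le hmn.le
  refine ⟨P.extend hne hdisj hsup, ?_, mem_insert_self _ _, subset_insert _ _⟩
  intro t ht
  rcases mem_insert.mp ht with rfl | ht
  · intro a ha b hb c hac hcb
    simp only [mem_Ico] at *
    omega
  · exact hP t ht

end Consecutive

section Cost

variable (w : ℕ → ℕ → ℝ)

/-- The part of the cost from pairs `a < b` with `b ∈ Ico m n`, when `Ico m n` is the last part. -/
noncomputable def lastBlockCost (m n : ℕ) : ℝ :=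
  ∑ b ∈ Ico m n, (∑ a ∈ range m, max (w a b) 0 + ∑ a ∈ Ico m b, max (-w a b) 0)

lemma lastBlockCost_succ {m n : ℕ} (hmn : m ≤ n) :
    lastBlockCost w m (n + 1) =
      lastBlockCost w m n + (∑ a ∈ range m, max (w a n) 0 + ∑ a ∈ Ico m n, max (-w a n) 0) :=
  sum_Ico_succ_top hmn _

lemma pcost_range (n : ℕ) (P : Finpartition (range n)) :
    pcost w (range n) P = ∑ b ∈ range n, ∑ a ∈ range b,
      if samePartN P a b then max (-w a b) 0 else max (w a b) 0 := by
  refine sum_congr rfl fun b hb => sum_congr ?_ fun _ _ => rfl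
  ext a
  simp only [mem_filter, mem_range] at hb ⊢
  omega

lemma pcost_eq_add_lastBlockCost {m n : ℕ} (hmn : m ≤ n) {P : Finpartition (range n)}
    (hP : Ico m n ∈ P.parts) {Q : Finpartition (range m)} (hQP : Q.parts ⊆ P.parts) :
    pcost w (range n) P = pcost w (range m) Q + lastBlockCost w m n := by
  rw [pcost_range, pcost_range, ← sum_range_add_sum_Ico _ hmn, lastBlockCost]
  congr 1
  · exact sum_congr rfl fun b hb => sum_congr rfl fun _ _ =>
      if_congr (samePartN_iff_of_parts_subset hQP hb).symm rfl rfl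
  · refine sum_congr rfl fun b hb => ?_
    obtain ⟨hmb, hbn⟩ := mem_Ico.mp hb
    have hsame : ∀ a < b, samePartN P a b ↔ m ≤ a := fun a hab => by
      rw [samePartN_iff_mem_of_mem_parts hP hb, mem_Ico]
      omega
    rw [← sum_range_add_sum_Ico _ hmb]
    congr 1
    · refine sum_congr rfl fun a ha => if_neg ?_
      have := mem_range.mp ha
      rw [hsame a (by omega)]
      omega
    · refine sum_congr rfl fun a ha => if_pos ?_
      obtain ⟨hma, hab⟩ := mem_Ico.mp ha
      exact (hsame a hab).mpr hma

end Cost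

section DynamicProgram

variable (w : ℕ → ℕ → ℝ)

/-- `opt w n` is the paper's `opt(n-1)`, the value for the first `n` vertices
(and `0` for the empty prefix). -/
noncomputable def opt : ℕ → ℝ
  | 0 => 0
  | n + 1 => (range (n + 1)).inf' nonempty_range_add_one (optRow w n)

variable {w}

lemma optRow_add (hw : ∀ a b, w a b = w b a) (m i : ℕ) :
    optRow w (m + i) i = opt w m + lastBlockCost w m (m + i + 1) := by
  induction i with
  | zero =>
    rw [add_zero, lastBlockCost_succ w le_rfl]
    cases m with
    | zero => simp [optRow, opt, lastBlockCost]
    | succ j => simp [optRow, opt, lastBlockCost, hw (j + 1)]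
  | succ i ih =>
    rw [← add_assoc, optRow.eq_3, ih, lastBlockCost_succ w (n := m + i + 1) (by omega),
      show m + i + 1 - (i + 1) = m by omega]
    simp only [hw (m + i + 1)]
    ring

lemma opt_succ (hw : ∀ a b, w a b = w b a) (n : ℕ) :
    opt w (n + 1) =
      (range (n + 1)).inf' nonempty_range_add_one fun m => opt w m + lastBlockCost w m (n + 1) := by
  have hrow : ∀ m ≤ n, optRow w n (n - m) = opt w m + lastBlockCost w m (n + 1) := by
    intro m hm
    obtain ⟨i, rfl⟩ := Nat.exists_eq_add_of_le hm
    rw [Nat.add_sub_cancel_left, optRow_add hw]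
  rw [opt]
  refine le_antisymm (le_inf' _ _ fun m hm => ?_) (le_inf' _ _ fun i hi => ?_)
  · have hm : m ≤ n := Nat.lt_succ_iff.mp (mem_range.mp hm)
    exact hrow m hm ▸ inf'_le _ (mem_range.mpr (by omega))
  · have hi : i ≤ n := Nat.lt_succ_iff.mp (mem_range.mp hi)
    have := hrow (n - i) (by omega)
    rw [Nat.sub_sub_self hi] at this
    exact this ▸ inf'_le _ (mem_range.mpr (by omega))

end DynamicProgram

section Optimality

variable {w : ℕ → ℕ → ℝ}

lemma opt_le_pcost (hw : ∀ a b, w a b = w b a) (n : ℕ) (P : Finpartition (range n))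
    (hP : IsConsecPartition P) : opt w n ≤ pcost w (range n) P := by
  induction n using Nat.strong_induction_on with
  | _ n ih =>
  cases n with
  | zero => simp [opt, pcost]
  | succ n =>
    obtain ⟨m, hmn, hlast⟩ := hP.exists_Ico_mem_parts
    obtain ⟨Q, hQ, hQP⟩ := hP.exists_restrict hlast
    calc opt w (n + 1) ≤ opt w m + lastBlockCost w m (n + 1) :=
          opt_succ hw n ▸ inf'_le _ (mem_range.mpr (Nat.lt_succ_of_le hmn))
      _ ≤ pcost w (range m) Q + lastBlockCost w m (n + 1) := by
          gcongr
          exact ih m (Nat.lt_succ_of_le hmn) Q hQ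
      _ = pcost w (range (n + 1)) P :=
          (pcost_eq_add_lastBlockCost w (Nat.le_succ_of_le hmn) hlast hQP).symm

lemma exists_isConsecPartition_pcost_eq_opt (hw : ∀ a b, w a b = w b a) (n : ℕ) :
    ∃ P : Finpartition (range n), IsConsecPartition P ∧ pcost w (range n) P = opt w n := by
  induction n using Nat.strong_induction_on with
  | _ n ih =>
  cases n with
  | zero =>
    exact ⟨⊥, fun t ht a ha => absurd (Finpartition.le _ ht ha) (by simp), by simp [opt, pcost]⟩
  | succ n =>
    obtain ⟨m, hm, hmin⟩ := exists_mem_eq_inf' nonempty_range_add_one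
      fun m => opt w m + lastBlockCost w m (n + 1)
    have hmn : m < n + 1 := mem_range.mp hm
    obtain ⟨Q, hQ, hQopt⟩ := ih m hmn
    obtain ⟨P, hP, hlast, hQP⟩ := hQ.exists_extend hmn
    refine ⟨P, hP, ?_⟩
    rw [pcost_eq_add_lastBlockCost w hmn.le hlast hQP, hQopt, opt_succ hw, hmin]

end Optimality

/-- The minimum weighted editing cost over consecutive-interval partitions is attained,
and `opt(n-1)` as computed by the recurrence equals this minimum. -/
theorem dp_computes_minimum (w : ℕ → ℕ → ℝ) (hw : ∀ a b, w a b = w b a)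
    (n : ℕ) (hn : 1 ≤ n) :
    ∃ P : Finpartition (Finset.range n), IsConsecPartition P ∧
      (∀ Q : Finpartition (Finset.range n), IsConsecPartition Q →
        pcost w (Finset.range n) P ≤ pcost w (Finset.range n) Q) ∧
      (Finset.range n).inf' (Finset.nonempty_range_iff.mpr (by omega))
          (fun i => optRow w (n - 1) i)
        = pcost w (Finset.range n) P := by
  obtain ⟨P, hP, hPopt⟩ := exists_isConsecPartition_pcost_eq_opt hw n
  refine ⟨P, hP, fun Q hQ => hPopt ▸ opt_le_pcost hw n Q hQ, ?_⟩
  obtain ⟨m, rfl⟩ : ∃ m, n = m + 1 := ⟨n - 1, by omega⟩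
  exact hPopt.symm
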